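/- Let n ≥ 2 and consider the n-player unanimity game, in which every player's Shapley value is 1/n. If one player splits into k ≥ 2 pseudonyms, the resulting game is the (n + k − 1)-player unanimity game, in which each pseudonym has Shapley value 1/(n + k − 1), so the latent provider's total payment after the split is k/(n + k − 1). The multiplicative split-gain is therefore G_Sh(n,k) = (k/(n + k − 1)) / (1/n) = n·k/(n + k − 1), which is strictly greater than 1 for all n, k ≥ 2, and for each fixed k converges to k as n → ∞. -/

import Mathlib

open Finset Filter

/-- The Shapley value of player `i` in the cooperative game `v` on the full
finite player set of type `ι`. -/
noncomputable def shapley {ι : Type*} [Fintype ι] [DecidableEq ι]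
    (v : Finset ι → ℝ) (i : ι) : ℝ :=
  ∑ T ∈ ((Finset.univ : Finset ι).erase i).powerset,
    ((Nat.factorial T.card * Nat.factorial (Fintype.card ι - 1 - T.card) : ℝ) /
      Nat.factorial (Fintype.card ι)) * (v (insert i T) - v T)

/-- The unanimity game on the player set `N`. -/
noncomputable def unanimity {ι : Type*} [DecidableEq ι]
    (N : Finset ι) (T : Finset ι) : ℝ :=
  if N ⊆ T then 1 else 0

/-! In the unanimity game of the grand coalition a player's marginal contribution vanishes
except when it joins the coalition of all other players, so its Shapley value is the single
weight `(n - 1)! 0! / n! = 1 / n`. The split gain `n k / (n + k - 1)` exceeds `1` because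
`n k - (n + k - 1) = (n - 1) (k - 1)`. -/

section Unanimity

variable {ι : Type*} [Fintype ι] [DecidableEq ι]

lemma unanimity_univ_apply (T : Finset ι) : unanimity univ T = if T = univ then 1 else 0 := by
  simp only [unanimity, univ_subset_iff]

lemma unanimity_univ_insert_sub {i : ι} {T : Finset ι} (hT : T ⊆ univ.erase i) :
    unanimity univ (insert i T) - unanimity univ T = if T = univ.erase i then 1 else 0 := by
  have hiT : i ∉ T := fun h => notMem_erase i univ (hT h)
  have hT_ne : T ≠ univ := fun h => hiT (h ▸ mem_univ i)
  have h_insert : insert i T = univ ↔ T = univ.erase i := by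
    constructor
    · intro h; rw [← h, erase_insert hiT]
    · rintro rfl; exact insert_erase (mem_univ i)
  simp only [unanimity_univ_apply, h_insert, hT_ne, if_false, sub_zero]

theorem shapley_unanimity_univ (i : ι) :
    shapley (unanimity (univ : Finset ι)) i = 1 / Fintype.card ι := by
  have hcard : 0 < Fintype.card ι := Fintype.card_pos_iff.mpr ⟨i⟩
  rw [shapley, sum_eq_single_of_mem _ (mem_powerset_self _)]
  · rw [unanimity_univ_insert_sub subset_rfl, if_pos rfl, card_erase_of_mem (mem_univ i),
      card_univ, Nat.sub_self, Nat.factorial_zero, ← Nat.mul_factorial_pred hcard.ne']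
    push_cast
    field_simp
  · intro T hT hT_ne
    rw [unanimity_univ_insert_sub (mem_powerset.mp hT), if_neg hT_ne, mul_zero]

theorem sum_shapley_unanimity_univ (J : Finset ι) :
    ∑ j ∈ J, shapley (unanimity (univ : Finset ι)) j = J.card / Fintype.card ι := by
  simp only [shapley_unanimity_univ, sum_const, nsmul_eq_mul, mul_one_div]

end Unanimity

lemma one_lt_mul_div_add_sub_one {x y : ℝ} (hx : 1 < x) (hy : 1 < y) :
    1 < x * y / (x + y - 1) := by
  rw [one_lt_div (by linarith)]
  nlinarith

lemma tendsto_natCast_mul_div_add_sub_one (c : ℝ) :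
    Tendsto (fun m : ℕ => (m : ℝ) * c / (m + c - 1)) atTop (nhds c) := by
  have h := (tendsto_natCast_div_add_atTop (c - 1)).mul_const c
  rw [one_mul] at h
  exact h.congr fun m => by ring

/-- In the `n`-player unanimity game every player's Shapley value is `1/n`;
after one player splits into `k ≥ 2` pseudonyms, the resulting
`(n+k-1)`-player unanimity game gives each pseudonym Shapley value
`1/(n+k-1)`, so the latent provider's total is `k/(n+k-1)`; the multiplicative
split-gain is `n*k/(n+k-1) > 1`, converging to `k` as `n → ∞`. -/
theorem shapley_unanimity_split_gain (n k : ℕ) (hn : 2 ≤ n) (hk : 2 ≤ k) :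
    (∀ i : Fin n,
      shapley (unanimity (Finset.univ : Finset (Fin n))) i = 1 / n) ∧
    (∀ i : Fin (n + k - 1),
      shapley (unanimity (Finset.univ : Finset (Fin (n + k - 1)))) i
        = 1 / ((n : ℝ) + k - 1)) ∧
    (∀ J : Finset (Fin (n + k - 1)), J.card = k →
      ∑ j ∈ J, shapley (unanimity (Finset.univ : Finset (Fin (n + k - 1)))) j
        = k / ((n : ℝ) + k - 1)) ∧
    ((k / ((n : ℝ) + k - 1)) / (1 / n) = n * k / ((n : ℝ) + k - 1)) ∧
    (1 < (n : ℝ) * k / ((n : ℝ) + k - 1)) ∧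
    Tendsto (fun m : ℕ => (m : ℝ) * k / ((m : ℝ) + k - 1)) atTop (nhds k) := by
  have hcard : (Fintype.card (Fin (n + k - 1)) : ℝ) = n + k - 1 := by
    rw [Fintype.card_fin, Nat.cast_sub (by omega)]
    push_cast
    ring
  have hn' : (1 : ℝ) < n := by exact_mod_cast hn
  have hk' : (1 : ℝ) < k := by exact_mod_cast hk
  refine ⟨fun i => ?_, fun i => ?_, fun J hJ => ?_, ?_, one_lt_mul_div_add_sub_one hn' hk',
    tendsto_natCast_mul_div_add_sub_one k⟩
  · rw [shapley_unanimity_univ, Fintype.card_fin]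
  · rw [shapley_unanimity_univ, hcard]
  · rw [sum_shapley_unanimity_univ, hJ, hcard]
  · rw [one_div, div_inv_eq_mul, div_mul_eq_mul_div, mul_comm]
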